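/- Let (X,d,μ) be a complete, geodesic metric measure space with μ a C-doubling measure. For every ε > 0 there exists δ > 0, depending only on ε and C, such that for every set E ⊆ X and every closed ball B of radius r with B ∩ E ≠ ∅: if d_E(B) < δ then sparse(E,B) < ε. Explicitly, one may take δ = (ε/8)·C^{−N}, where N is the smallest integer with 2^N·(ε/8) ≥ 2. -/

import Mathlib

open Metric MeasureTheory
open scoped ENNReal

noncomputable section

/-- The sparsity of a set `E` in the closed ball `B(c,r)`:
`sparse(E,B) = sup { dist(x, E ∩ B) : x ∈ B } / r`. -/
def sparseIn {X : Type*} [MetricSpace X] (E : Set X) (c : X) (r : ℝ) : ℝ :=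
  (⨆ x : (Metric.closedBall c r), Metric.infDist (x : X) (E ∩ Metric.closedBall c r)) / r

/-- `d_E(B(c,r)) = (1/μ(B)) ∫_B dist(x,E)/r dμ(x)`. -/
def dE {X : Type*} [MetricSpace X] [MeasurableSpace X] (μ : MeasureTheory.Measure X)
    (E : Set X) (c : X) (r : ℝ) : ℝ :=
  (∫ x in Metric.closedBall c r, Metric.infDist x E ∂μ) /
    (r * (μ (Metric.closedBall c r)).toReal)

/-- A metric space is geodesic if every pair of points is joined by an isometric
embedding of the interval `[0, d(x,y)]`. -/
def IsGeodesicSpace (X : Type*) [MetricSpace X] : Prop :=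
  ∀ x y : X, ∃ f : ℝ → X, f 0 = x ∧ f (dist x y) = y ∧
    ∀ s ∈ Set.Icc (0 : ℝ) (dist x y), ∀ t ∈ Set.Icc (0 : ℝ) (dist x y),
      dist (f s) (f t) = |s - t|

/-- A `C`-doubling measure: nonzero, finite on balls, and doubling with constant `C`. -/
def IsDoubling {X : Type*} [MetricSpace X] [MeasurableSpace X]
    (μ : MeasureTheory.Measure X) (C : ℝ) : Prop :=
  μ ≠ 0 ∧ (∀ (x : X) (r : ℝ), μ (Metric.closedBall x r) < ⊤) ∧
    ∀ (x : X) (r : ℝ),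
      μ (Metric.closedBall x (2 * r)) ≤ ENNReal.ofReal C * μ (Metric.closedBall x r)

/-!
If `sparse(E,B) ≥ ε` for `B = B(c,r)`, some `x ∈ B` is at distance `> εr/2` from `E ∩ B`.
Stepping from `x` towards `c` along a geodesic yields a ball `B(y, εr/8) ⊆ B` on which
`dist(·,E) ≥ εr/8`, so `∫_B dist(·,E) ≥ (εr/8)·μ(B(y, εr/8))`. The choice of `N` gives
`B ⊆ B(y, 2^N·εr/8)`, and `N` doublings give `μ(B) ≤ C^N·μ(B(y, εr/8))`; together
`d_E(B) ≥ (ε/8)·C^{-N}`.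
-/

section

variable {X : Type*} [MetricSpace X]

namespace IsDoubling

variable [MeasurableSpace X] {μ : Measure X} {C : ℝ}

theorem measure_closedBall_two_pow_mul_le (hdbl : IsDoubling μ C) (x : X) (s : ℝ) (n : ℕ) :
    μ (closedBall x (2 ^ n * s)) ≤ ENNReal.ofReal C ^ n * μ (closedBall x s) := by
  induction n with
  | zero => simp
  | succ k ih =>
    calc μ (closedBall x (2 ^ (k + 1) * s))
        = μ (closedBall x (2 * (2 ^ k * s))) := by rw [pow_succ', mul_assoc]
      _ ≤ ENNReal.ofReal C * μ (closedBall x (2 ^ k * s)) := hdbl.2.2 x _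
      _ ≤ ENNReal.ofReal C * (ENNReal.ofReal C ^ k * μ (closedBall x s)) := by gcongr
      _ = ENNReal.ofReal C ^ (k + 1) * μ (closedBall x s) := by ring

/-- A null ball would make every concentric ball null by doubling, hence `μ = 0`. -/
theorem measure_closedBall_pos (hdbl : IsDoubling μ C) (x : X) {s : ℝ} (hs : 0 < s) :
    0 < μ (closedBall x s) := by
  refine pos_iff_ne_zero.2 fun h0 => hdbl.1 (Measure.measure_univ_eq_zero.1 ?_)
  have hcover : ⋃ n : ℕ, closedBall x (2 ^ n * s) = Set.univ := by
    refine Set.eq_univ_of_forall fun w => Set.mem_iUnion.2 ?_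
    obtain ⟨n, hn⟩ := pow_unbounded_of_one_lt (dist w x / s) (one_lt_two (α := ℝ))
    exact ⟨n, mem_closedBall.2 ((div_lt_iff₀ hs).1 hn).le⟩
  rw [← hcover]
  refine measure_iUnion_null fun n => le_antisymm ?_ zero_le
  simpa [h0] using hdbl.measure_closedBall_two_pow_mul_le x s n

theorem toReal_measure_closedBall_le (hdbl : IsDoubling μ C) (hC : 0 ≤ C) {c y : X}
    {r s : ℝ} {n : ℕ} (h : closedBall c r ⊆ closedBall y (2 ^ n * s)) :
    (μ (closedBall c r)).toReal ≤ C ^ n * (μ (closedBall y s)).toReal := by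
  have hfin : ENNReal.ofReal C ^ n * μ (closedBall y s) ≠ ⊤ :=
    ENNReal.mul_ne_top (by simp) (hdbl.2.1 y s).ne
  have := ENNReal.toReal_mono hfin
    ((measure_mono h).trans (hdbl.measure_closedBall_two_pow_mul_le y s n))
  rwa [ENNReal.toReal_mul, ENNReal.toReal_pow, ENNReal.toReal_ofReal hC] at this

variable [OpensMeasurableSpace X]

theorem integrableOn_infDist_closedBall (hdbl : IsDoubling μ C) (E : Set X) (c : X)
    (r : ℝ) : IntegrableOn (infDist · E) (closedBall c r) μ := by
  refine Measure.integrableOn_of_bounded (M := infDist c E + r) (hdbl.2.1 c r).ne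
    (continuous_infDist_pt E).aestronglyMeasurable ?_
  filter_upwards [ae_restrict_mem measurableSet_closedBall] with z hz
  rw [Real.norm_of_nonneg infDist_nonneg]
  linarith [infDist_le_infDist_add_dist (x := z) (y := c) (s := E), mem_closedBall.1 hz]

theorem div_le_dE (hdbl : IsDoubling μ C) (hC : 0 < C) {E : Set X} {c y : X} {r s : ℝ}
    {n : ℕ} (hr : 0 < r) (hsub : closedBall y s ⊆ closedBall c r)
    (hsup : closedBall c r ⊆ closedBall y (2 ^ n * s))
    (hfar : ∀ z ∈ closedBall y s, s ≤ infDist z E) :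
    s / (C ^ n * r) ≤ dE μ E c r := by
  have hint := hdbl.integrableOn_infDist_closedBall E c r
  have hball : s * (μ (closedBall y s)).toReal ≤ ∫ z in closedBall c r, infDist z E ∂μ :=
    (setIntegral_ge_of_const_le_real measurableSet_closedBall (hdbl.2.1 y s).ne hfar
      (hint.mono_set hsub)).trans
      (setIntegral_mono_set hint (.of_forall fun _ => infDist_nonneg) (.of_forall hsub))
  have hm : 0 < (μ (closedBall c r)).toReal :=
    ENNReal.toReal_pos (hdbl.measure_closedBall_pos c hr).ne' (hdbl.2.1 c r).ne
  have hs : 0 ≤ s := (mul_nonneg_iff_of_pos_left (by positivity)).1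
    (nonempty_closedBall.1 ⟨c, hsup (mem_closedBall_self hr.le)⟩)
  have hcmp := hdbl.toReal_measure_closedBall_le hC.le hsup
  rw [dE, div_le_div_iff₀ (by positivity) (by positivity)]
  calc s * (r * (μ (closedBall c r)).toReal)
      ≤ s * (r * (C ^ n * (μ (closedBall y s)).toReal)) := by gcongr
    _ = s * (μ (closedBall y s)).toReal * (C ^ n * r) := by ring
    _ ≤ (∫ z in closedBall c r, infDist z E ∂μ) * (C ^ n * r) := by gcongr

end IsDoubling

theorem sparseIn_le_two {E : Set X} {c : X} {r : ℝ} (hne : (closedBall c r ∩ E).Nonempty) :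
    sparseIn E c r ≤ 2 := by
  obtain ⟨e, heB, heE⟩ := hne
  have hr : 0 ≤ r := nonempty_closedBall.1 ⟨e, heB⟩
  have : Nonempty (closedBall c r) := ⟨⟨e, heB⟩⟩
  refine div_le_of_le_mul₀ hr zero_le_two (ciSup_le fun x => ?_)
  calc infDist (x : X) (E ∩ closedBall c r) ≤ dist (x : X) e := infDist_le_dist_of_mem ⟨heE, heB⟩
    _ ≤ dist (x : X) c + dist e c := dist_triangle_right _ _ _
    _ ≤ 2 * r := by linarith [mem_closedBall.1 x.2, mem_closedBall.1 heB]

theorem exists_lt_infDist_of_lt_sparseIn {E : Set X} {c : X} {r t : ℝ} (hr : 0 < r)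
    (ht : t < sparseIn E c r) : ∃ x ∈ closedBall c r, t * r < infDist x (E ∩ closedBall c r) := by
  have : Nonempty (closedBall c r) := ⟨⟨c, mem_closedBall_self hr.le⟩⟩
  obtain ⟨x, hx⟩ := exists_lt_of_lt_ciSup ((lt_div_iff₀ hr).1 ht)
  exact ⟨x, x.2, hx⟩

namespace IsGeodesicSpace

theorem exists_dist_eq_sub (hgeo : IsGeodesicSpace X) {x c : X} {t : ℝ} (ht₀ : 0 ≤ t)
    (ht : t ≤ dist x c) : ∃ y, dist x y = t ∧ dist y c = dist x c - t := by
  obtain ⟨f, hf0, hf1, hfiso⟩ := hgeo x c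
  refine ⟨f t, ?_, ?_⟩
  · rw [← hf0, hfiso 0 ⟨le_rfl, dist_nonneg⟩ t ⟨ht₀, ht⟩, zero_sub, abs_neg, abs_of_nonneg ht₀]
  · rw [← hf1, hfiso t ⟨ht₀, ht⟩ _ ⟨dist_nonneg, le_rfl⟩, hf1, abs_sub_comm,
      abs_of_nonneg (sub_nonneg.2 ht)]

/-- The centre `y` is found on the geodesic from `x` to `c`. Points of `E` inside `B(c,r)` are
far from `x`, hence from `B(y,s)`; points of `E` outside are far because `B(y,s)` sits `s` deep
inside `B(c,r)`. -/
theorem exists_closedBall_subset_le_infDist (hgeo : IsGeodesicSpace X) {E : Set X}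
    (hE : E.Nonempty) {c x : X} {r s : ℝ} (hs : 0 ≤ s) (hsr : 2 * s ≤ r)
    (hx : x ∈ closedBall c r) (hfar : 4 * s ≤ infDist x (E ∩ closedBall c r)) :
    ∃ y, closedBall y s ⊆ closedBall c r ∧ ∀ z ∈ closedBall y s, s ≤ infDist z E := by
  have hxc := mem_closedBall.1 hx
  obtain ⟨y, hxy, hyc⟩ := hgeo.exists_dist_eq_sub (le_min (by linarith) dist_nonneg)
    (min_le_right (2 * s) (dist x c))
  have hxy' : dist x y ≤ 2 * s := hxy ▸ min_le_left _ _
  have hyc' : dist y c ≤ r - 2 * s := by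
    rw [hyc]; rcases min_cases (2 * s) (dist x c) with ⟨h, -⟩ | ⟨h, -⟩ <;> rw [h] <;> linarith
  refine ⟨y, fun z hz => mem_closedBall.2 ?_, fun z hz => ?_⟩
  · linarith [dist_triangle z y c, mem_closedBall.1 hz]
  refine le_of_not_gt fun hlt => ?_
  obtain ⟨e, heE, hze⟩ := (infDist_lt_iff hE).1 hlt
  have hzy := mem_closedBall.1 hz
  by_cases heB : e ∈ closedBall c r
  · have := infDist_le_dist_of_mem (x := x) (show e ∈ E ∩ closedBall c r from ⟨heE, heB⟩)
    linarith [dist_triangle4 x y z e, dist_comm y z]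
  · linarith [mem_closedBall.not.1 heB, dist_triangle4 e z y c, dist_comm e z, dist_comm z y]

end IsGeodesicSpace

end

theorem sparse_lt_of_dE_lt_general (X : Type*) [MetricSpace X]
    [MeasurableSpace X] [BorelSpace X] (μ : MeasureTheory.Measure X) (C : ℝ) (hC : 0 < C)
    (hgeo : IsGeodesicSpace X) (hdbl : IsDoubling μ C)
    (ε : ℝ) (hε : 0 < ε) (N : ℤ)
    (hN : 2 ≤ (2 : ℝ) ^ N * (ε / 8)) :
    ∀ (E : Set X) (c : X) (r : ℝ), (Metric.closedBall c r ∩ E).Nonempty →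
      dE μ E c r < ε / 8 * C ^ (-N) → sparseIn E c r < ε := by
  intro E c r hne hdE
  by_contra! hsp
  have hr : 0 < r := by
    rcases (nonempty_closedBall.1 (hne.mono Set.inter_subset_left)).eq_or_lt with rfl | hr
    · -- `sparseIn` divides by `r`, so it is the junk value `0` at `r = 0`.
      simp only [sparseIn, div_zero] at hsp
      linarith
    · exact hr
  have hε2 : ε ≤ 2 := hsp.trans (sparseIn_le_two hne)
  lift N to ℕ using le_of_not_gt fun hN0 => by
    nlinarith [zpow_lt_one_of_neg₀ (one_lt_two (α := ℝ)) hN0]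
  rw [zpow_natCast] at hN
  rw [zpow_neg, zpow_natCast] at hdE
  obtain ⟨x, hx, hxfar⟩ := exists_lt_infDist_of_lt_sparseIn hr
    (show ε / 2 < sparseIn E c r by linarith)
  obtain ⟨y, hsub, hyfar⟩ := hgeo.exists_closedBall_subset_le_infDist
    (hne.mono Set.inter_subset_right) (s := ε * r / 8) (by positivity) (by nlinarith) hx
    (by linarith)
  have hyc : dist y c ≤ r := hsub (mem_closedBall_self (by positivity))
  have hsup : closedBall c r ⊆ closedBall y (2 ^ N * (ε * r / 8)) :=
    closedBall_subset_closedBall' (by rw [dist_comm]; nlinarith)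
  have hlow := hdbl.div_le_dE hC hr hsub hsup hyfar
  have hδ : ε * r / 8 / (C ^ N * r) = ε / 8 * (C ^ N)⁻¹ := by field_simp
  linarith

/-- In a complete geodesic metric measure space with a `C`-doubling measure, for every
`ε > 0` the explicit constant `δ = (ε/8)·C^{-N} > 0`, where `N` is the smallest integer
with `2^N·(ε/8) ≥ 2`, is such that for every set `E` and closed ball `B` meeting `E`:
`d_E(B) < δ` implies `sparse(E,B) < ε`. -/
theorem sparse_lt_of_dE_lt (X : Type*) [MetricSpace X] [CompleteSpace X]
    [MeasurableSpace X] [BorelSpace X] (μ : MeasureTheory.Measure X) (C : ℝ) (hC : 0 < C)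
    (hgeo : IsGeodesicSpace X) (hdbl : IsDoubling μ C)
    (ε : ℝ) (hε : 0 < ε) (N : ℤ)
    (hN : 2 ≤ (2 : ℝ) ^ N * (ε / 8))
    (hNmin : ∀ m : ℤ, m < N → (2 : ℝ) ^ m * (ε / 8) < 2) :
    ∀ (E : Set X) (c : X) (r : ℝ), (Metric.closedBall c r ∩ E).Nonempty →
      dE μ E c r < ε / 8 * C ^ (-N) → sparseIn E c r < ε :=
  sparse_lt_of_dE_lt_general X μ C hC hgeo hdbl ε hε N hN
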